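/- arXiv:1912.12498 — 2 statements merged into one kernel-verified Lean document; each statement's English description precedes it below -/
import Mathlib

section
/- Let φ₁ and φ₂ be mild solutions with matrix A and initial data φ₁,₀, φ₂,₀ ∈ Φ. Let p > 0 and let u : ℝ^d × [0,∞) → [0,∞) be continuous, with sup_k u(k,t)/(1+|k|^p) < ∞ for each t, and satisfying the supersolution inequality u(k,t) ≥ e^{-t} |φ₁,₀ − φ₂,₀|(e^{-tA}k) + ∫₀ᵗ e^{-(t-τ)} L[u(·,τ)](e^{-(t-τ)A}k) dτ for all k ∈ ℝ^d and t ≥ 0. Then |φ₁(k,t) − φ₂(k,t)| ≤ u(k,t) for all k ∈ ℝ^d and t ≥ 0. -/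
open MeasureTheory
open scoped Classical Matrix
noncomputable section

/-- ℝ^d with the Euclidean structure. -/
abbrev Rd (d : ℕ) := EuclideanSpace ℝ (Fin d)

/-- The unit sphere S^{d-1} in ℝ^d. -/
abbrev Sd (d : ℕ) := Metric.sphere (0 : Rd d) 1

/-- The surface measure on the unit sphere. -/
noncomputable def sphMeasure (d : ℕ) : Measure (Sd d) :=
  (volume : Measure (Rd d)).toSphere

/-- k₊ = (k + |k| n)/2. -/
noncomputable def kplus {d : ℕ} (k : Rd d) (n : Sd d) : Rd d :=
  (2⁻¹ : ℝ) • (k + ‖k‖ • (n : Rd d))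

/-- k₋ = (k − |k| n)/2. -/
noncomputable def kminus {d : ℕ} (k : Rd d) (n : Sd d) : Rd d :=
  (2⁻¹ : ℝ) • (k - ‖k‖ • (n : Rd d))

/-- k̂·n for k ≠ 0. -/
noncomputable def khatDot {d : ℕ} (k : Rd d) (n : Sd d) : ℝ :=
  inner ℝ (‖k‖⁻¹ • k) (n : Rd d)

/-- The gain operator I⁺(φ,ψ). -/
noncomputable def Iplus {d : ℕ} (g : ℝ → ℝ) (φ ψ : Rd d → ℂ) (k : Rd d) : ℂ :=
  if k = 0 then φ 0 * ψ 0
  else ∫ n, (g (khatDot k n) : ℂ) * φ (kplus k n) * ψ (kminus k n) ∂(sphMeasure d)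

/-- Γ[φ] = I⁺(φ,φ). -/
noncomputable def Gam {d : ℕ} (g : ℝ → ℝ) (φ : Rd d → ℂ) : Rd d → ℂ :=
  Iplus g φ φ

/-- The linearized operator L, complex-valued version. -/
noncomputable def LopC {d : ℕ} (g : ℝ → ℝ) (ψ : Rd d → ℂ) (k : Rd d) : ℂ :=
  if k = 0 then 2 * ψ 0
  else ∫ n, (g (khatDot k n) : ℂ) * (ψ (kplus k n) + ψ (kminus k n)) ∂(sphMeasure d)

/-- The linearized operator L, real-valued version. -/
noncomputable def LopR {d : ℕ} (g : ℝ → ℝ) (ψ : Rd d → ℝ) (k : Rd d) : ℝ :=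
  if k = 0 then 2 * ψ 0
  else ∫ n, g (khatDot k n) * (ψ (kplus k n) + ψ (kminus k n)) ∂(sphMeasure d)

/-- The Fourier transform (characteristic function) of a measure. -/
noncomputable def charFun {d : ℕ} (μ : Measure (Rd d)) (k : Rd d) : ℂ :=
  ∫ v, Complex.exp (-(Complex.I * ((inner ℝ k v : ℝ) : ℂ))) ∂μ

/-- φ is the characteristic function of a Borel probability measure on ℝ^d. -/
def IsCharFun {d : ℕ} (φ : Rd d → ℂ) : Prop :=
  ∃ μ : Measure (Rd d), IsProbabilityMeasure μ ∧ φ = _root_.charFun μ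

/-- A matrix acting on ℝ^d as a continuous linear map. -/
noncomputable def matCLM {d : ℕ} (A : Matrix (Fin d) (Fin d) ℝ) : Rd d →L[ℝ] Rd d :=
  LinearMap.toContinuousLinearMap (Matrix.toEuclideanLin A)

/-- The operator norm ‖A‖ = sup_{|k|=1} |Ak|. -/
noncomputable def opN {d : ℕ} (A : Matrix (Fin d) (Fin d) ℝ) : ℝ := ‖matCLM A‖

/-- e^{tA} k, matrix exponential applied to a vector. -/
noncomputable def expA {d : ℕ} (A : Matrix (Fin d) (Fin d) ℝ) (t : ℝ) (k : Rd d) : Rd d :=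
  matCLM (NormedSpace.exp (t • A)) k

/-- A mild solution of the Fourier-transformed equation ∂ₜφ + φ + (Ak)·∂ₖφ = Γ[φ]. -/
def IsMildSolution {d : ℕ} (g : ℝ → ℝ) (A : Matrix (Fin d) (Fin d) ℝ)
    (φ₀ : Rd d → ℂ) (φ : ℝ → Rd d → ℂ) : Prop :=
  (∀ t, 0 ≤ t → IsCharFun (φ t)) ∧
  (∀ t, 0 ≤ t → ∀ ε > (0:ℝ), ∃ δ > (0:ℝ), ∀ s, 0 ≤ s → |s - t| < δ →
      ∀ k, ‖φ s k - φ t k‖ ≤ ε) ∧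
  (∀ t, 0 ≤ t → ∀ k, φ t k =
      (Real.exp (-t) : ℂ) * φ₀ (expA A (-t) k)
        + ∫ τ in (0:ℝ)..t, (Real.exp (-(t - τ)) : ℂ) * Gam g (φ τ) (expA A (-(t - τ)) k))


open scoped RealInnerProductSpace

/-!
Write `Δ = |φ₁ - φ₂|`. Subtracting the two Duhamel formulas and using
`|ab - a'b'| ≤ |a - a'| + |b - b'|` for `|a|, |b'| ≤ 1` shows that `Δ` is a subsolution of the
linear problem: `Δ(t) ≤ e^{-t} Δ(0) ∘ e^{-tA} + ∫₀ᵗ e^{-(t-τ)} L[Δ(τ)] ∘ e^{-(t-τ)A} dτ`.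
Since `L` is monotone, `L[v + c] = L[v] + 2c` (because `∫ g = 1`) and `|k±| ≤ |k|`, inserting
`Δ ≤ u + εₙ` into this inequality and comparing with the supersolution inequality for `u` gives
`Δ ≤ u + εₙ₊₁` with `εₙ₊₁(t) = 2 ∫₀ᵗ εₙ`. Starting from `ε₀ = 2` (characteristic functions are
bounded by `1`), `εₙ(t) = 2 (2t)ⁿ / n! → 0`.
-/

open Set Filter Topology

instance isFiniteMeasure_sphMeasure (d : ℕ) : IsFiniteMeasure (sphMeasure d) := by
  unfold sphMeasure; infer_instance

section Preliminaries

variable {d : ℕ}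

open scoped Matrix.Norms.L2Operator in
theorem continuous_expA (A : Matrix (Fin d) (Fin d) ℝ) (k : Rd d) :
    Continuous fun s => expA A s k := by
  have hexp : Continuous fun s : ℝ => NormedSpace.exp (s • A) :=
    continuous_iff_continuousAt.2 fun s => (hasDerivAt_exp_smul_const A s).continuousAt
  have hmat : Continuous fun B : Matrix (Fin d) (Fin d) ℝ => Matrix.toEuclideanCLM (𝕜 := ℝ) B :=
    (Matrix.toEuclideanCLM (𝕜 := ℝ) (n := Fin d)).toAlgEquiv.toLinearEquiv.toLinearMap
      |>.continuous_of_finiteDimensional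
  exact (hmat.comp hexp).clm_apply continuous_const

theorem charFun_eq_charFun_neg (μ : Measure (Rd d)) (k : Rd d) :
    _root_.charFun μ k = MeasureTheory.charFun μ (-k) := by
  simp only [_root_.charFun, MeasureTheory.charFun_apply, inner_neg_right, real_inner_comm k]
  congr with v
  push_cast
  ring_nf

theorem IsCharFun.norm_le_one {φ : Rd d → ℂ} (h : IsCharFun φ) (k : Rd d) : ‖φ k‖ ≤ 1 := by
  obtain ⟨μ, hμ, rfl⟩ := h
  rw [charFun_eq_charFun_neg]
  exact norm_charFun_le_one _

theorem IsCharFun.continuous {φ : Rd d → ℂ} (h : IsCharFun φ) : Continuous φ := by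
  obtain ⟨μ, hμ, rfl⟩ := h
  simp only [funext (charFun_eq_charFun_neg μ)]
  exact continuous_charFun.comp continuous_neg

theorem norm_kplus_le (k : Rd d) (n : Sd d) : ‖kplus k n‖ ≤ ‖k‖ := by
  have h := norm_add_le k (‖k‖ • (n : Rd d))
  rw [norm_smul, norm_norm, norm_eq_of_mem_sphere, mul_one] at h
  rw [kplus, norm_smul, Real.norm_of_nonneg (by norm_num)]
  linarith

theorem norm_kminus_le (k : Rd d) (n : Sd d) : ‖kminus k n‖ ≤ ‖k‖ := by
  have h := norm_sub_le k (‖k‖ • (n : Rd d))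
  rw [norm_smul, norm_norm, norm_eq_of_mem_sphere, mul_one] at h
  rw [kminus, norm_smul, Real.norm_of_nonneg (by norm_num)]
  linarith

@[fun_prop]
theorem Continuous.kplus {X : Type*} [TopologicalSpace X] {f : X → Rd d} {n : X → Sd d}
    (hf : Continuous f) (hn : Continuous n) : Continuous fun x => kplus (f x) (n x) := by
  unfold _root_.kplus; fun_prop

@[fun_prop]
theorem Continuous.kminus {X : Type*} [TopologicalSpace X] {f : X → Rd d} {n : X → Sd d}
    (hf : Continuous f) (hn : Continuous n) : Continuous fun x => kminus (f x) (n x) := by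
  unfold _root_.kminus; fun_prop

@[fun_prop]
theorem Measurable.khatDot {X : Type*} [MeasurableSpace X] {f : X → Rd d} {n : X → Sd d}
    (hf : Measurable f) (hn : Measurable n) : Measurable fun x => khatDot (f x) (n x) := by
  unfold _root_.khatDot; fun_prop

end Preliminaries

structure IsNormalizedKernel (d : ℕ) (g : ℝ → ℝ) : Prop where
  measurable : Measurable g
  nonneg : ∀ x, 0 ≤ g x
  integral_inner_eq_one : ∀ ω : Rd d, ‖ω‖ = 1 → ∫ n, g ⟪ω, (n : Rd d)⟫ ∂(sphMeasure d) = 1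

namespace IsNormalizedKernel

variable {d : ℕ} {g : ℝ → ℝ} {k : Rd d}

theorem integral_khatDot (hg : IsNormalizedKernel d g) (hk : k ≠ 0) :
    ∫ n, g (khatDot k n) ∂(sphMeasure d) = 1 :=
  hg.integral_inner_eq_one _ <| by
    rw [norm_smul, norm_inv, norm_norm, inv_mul_cancel₀ (norm_ne_zero_iff.mpr hk)]

theorem integrable_khatDot (hg : IsNormalizedKernel d g) (hk : k ≠ 0) :
    Integrable (fun n => g (khatDot k n)) (sphMeasure d) :=
  .of_integral_ne_zero <| by rw [hg.integral_khatDot hk]; exact one_ne_zero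

theorem integrable_smul {E : Type*} [NormedAddCommGroup E] [NormedSpace ℝ E]
    (hg : IsNormalizedKernel d g) (hk : k ≠ 0) {F : Sd d → E} (hF : Continuous F) :
    Integrable (fun n => g (khatDot k n) • F n) (sphMeasure d) := by
  obtain ⟨C, hC⟩ := isCompact_univ.exists_bound_of_continuousOn hF.continuousOn
  exact (hg.integrable_khatDot hk).smul_bdd C hF.aestronglyMeasurable
    (ae_of_all _ fun n => hC n (mem_univ n))

end IsNormalizedKernel

section Operators

variable {d : ℕ} {g : ℝ → ℝ}

theorem LopR_zero (k : Rd d) : LopR g 0 k = 0 := by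
  unfold LopR; split_ifs <;> simp

theorem LopR_le_add (hg : IsNormalizedKernel d g) {v w : Rd d → ℝ} (hv : Continuous v)
    (hw : Continuous w) {B : ℝ} {k : Rd d} (hwv : ∀ x, ‖x‖ ≤ ‖k‖ → w x ≤ v x + B) :
    LopR g w k ≤ LopR g v k + 2 * B := by
  unfold LopR
  split_ifs with hk
  · linarith [hwv 0 (by simp)]
  have hint : ∀ {f : Rd d → ℝ}, Continuous f →
      Integrable (fun n => g (khatDot k n) * (f (kplus k n) + f (kminus k n))) (sphMeasure d) :=
    fun hf => hg.integrable_smul hk (by fun_prop)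
  have hgB := (hg.integrable_khatDot hk).const_mul (2 * B)
  calc ∫ n, g (khatDot k n) * (w (kplus k n) + w (kminus k n)) ∂(sphMeasure d)
      ≤ ∫ n, (g (khatDot k n) * (v (kplus k n) + v (kminus k n)) + 2 * B * g (khatDot k n))
          ∂(sphMeasure d) := by
        refine integral_mono (hint hw) ((hint hv).add hgB) fun n => ?_
        have := mul_le_mul_of_nonneg_left (add_le_add (hwv _ (norm_kplus_le k n))
          (hwv _ (norm_kminus_le k n))) (hg.nonneg (khatDot k n))
        linarith
    _ = _ := by
        rw [integral_add (hint hv) hgB, integral_const_mul, hg.integral_khatDot hk, mul_one]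

theorem abs_LopR_le (hg : IsNormalizedKernel d g) {v : Rd d → ℝ} (hv : Continuous v)
    {M : ℝ} {k : Rd d} (hM : ∀ x, ‖x‖ ≤ ‖k‖ → |v x| ≤ M) : |LopR g v k| ≤ 2 * M := by
  have hle := LopR_le_add hg continuous_const hv (v := 0) (B := M) fun x hx => by
    simpa using (abs_le.1 (hM x hx)).2
  have hge := LopR_le_add hg hv continuous_const (w := 0) (B := M) fun x hx => by
    simpa [neg_le_iff_add_nonneg] using (abs_le.1 (hM x hx)).1
  rw [LopR_zero] at hle hge
  exact abs_le.2 ⟨by linarith, by linarith⟩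

theorem norm_Gam_le_one (hg : IsNormalizedKernel d g) {φ : Rd d → ℂ} (hφ : ∀ x, ‖φ x‖ ≤ 1)
    (k : Rd d) : ‖Gam g φ k‖ ≤ 1 := by
  unfold Gam Iplus
  split_ifs with hk
  · rw [norm_mul]; exact mul_le_one₀ (hφ 0) (norm_nonneg _) (hφ 0)
  refine (norm_integral_le_of_norm_le (hg.integrable_khatDot hk) (ae_of_all _ fun n => ?_)).trans
    (hg.integral_khatDot hk).le
  rw [norm_mul, norm_mul, Complex.norm_real, Real.norm_of_nonneg (hg.nonneg _), mul_assoc]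
  exact mul_le_of_le_one_right (hg.nonneg _) (mul_le_one₀ (hφ _) (norm_nonneg _) (hφ _))

theorem norm_mul_sub_mul_le_of_norm_le_one {R : Type*} [NormedRing R] {a b a' b' : R}
    (ha : ‖a‖ ≤ 1) (hb' : ‖b'‖ ≤ 1) : ‖a * b - a' * b'‖ ≤ ‖a - a'‖ + ‖b - b'‖ := by
  calc ‖a * b - a' * b'‖ = ‖a * (b - b') + (a - a') * b'‖ := by noncomm_ring
    _ ≤ ‖a‖ * ‖b - b'‖ + ‖a - a'‖ * ‖b'‖ :=
        (norm_add_le _ _).trans (add_le_add (norm_mul_le _ _) (norm_mul_le _ _))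
    _ ≤ ‖b - b'‖ + ‖a - a'‖ := by gcongr <;> [exact mul_le_of_le_one_left (norm_nonneg _) ha;
        exact mul_le_of_le_one_right (norm_nonneg _) hb']
    _ = _ := add_comm _ _

theorem norm_Gam_sub_le (hg : IsNormalizedKernel d g) {φ ψ : Rd d → ℂ} (hφ : Continuous φ)
    (hψ : Continuous ψ) (hφ1 : ∀ x, ‖φ x‖ ≤ 1) (hψ1 : ∀ x, ‖ψ x‖ ≤ 1) (k : Rd d) :
    ‖Gam g φ k - Gam g ψ k‖ ≤ LopR g (fun x => ‖φ x - ψ x‖) k := by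
  unfold Gam Iplus LopR
  split_ifs with hk
  · linarith [norm_mul_sub_mul_le_of_norm_le_one (b := φ 0) (a' := ψ 0) (hφ1 0) (hψ1 0)]
  have hint : ∀ {χ : Rd d → ℂ}, Continuous χ → Integrable
      (fun n => (g (khatDot k n) : ℂ) * χ (kplus k n) * χ (kminus k n)) (sphMeasure d) :=
    fun {χ} hχ => by
      simpa only [Complex.real_smul, mul_assoc] using
        hg.integrable_smul hk (F := fun n => χ (kplus k n) * χ (kminus k n)) (by fun_prop)
  rw [← integral_sub (hint hφ) (hint hψ)]
  refine norm_integral_le_of_norm_le (hg.integrable_smul hk (by fun_prop))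
    (ae_of_all _ fun n => ?_)
  rw [mul_assoc, mul_assoc, ← mul_sub, norm_mul, Complex.norm_real,
    Real.norm_of_nonneg (hg.nonneg _)]
  exact mul_le_mul_of_nonneg_left
    (norm_mul_sub_mul_le_of_norm_le_one (hφ1 _) (hψ1 _)) (hg.nonneg _)

end Operators

section TimeRegularity

variable {d : ℕ} {g : ℝ → ℝ}

theorem ContinuousOn.continuous_uncurry_max {X E : Type*} [TopologicalSpace X]
    [TopologicalSpace E] {f : ℝ → X → E} (hf : ContinuousOn (Function.uncurry f) (Ici 0 ×ˢ univ)) :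
    Continuous (Function.uncurry fun τ => f (max τ 0)) :=
  hf.comp_continuous ((continuous_fst.max continuous_const).prodMk continuous_snd)
    fun q => mk_mem_prod (le_max_right q.1 0) trivial

theorem ContinuousOn.continuous_of_uncurry {X E : Type*} [TopologicalSpace X]
    [TopologicalSpace E] {f : ℝ → X → E} (hf : ContinuousOn (Function.uncurry f) (Ici 0 ×ˢ univ))
    {τ : ℝ} (hτ : 0 ≤ τ) : Continuous (f τ) :=
  continuousOn_univ.1 (hf.uncurry_left τ hτ)

theorem measurable_LopR_comp (hg : Measurable g) {v : ℝ → Rd d → ℝ}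
    (hv : Continuous (Function.uncurry v)) {κ : ℝ → Rd d} (hκ : Continuous κ) :
    Measurable fun τ => LopR g (v τ) (κ τ) := by
  have hplus : Continuous fun q : ℝ × Sd d => v q.1 (kplus (κ q.1) q.2) :=
    hv.comp (continuous_fst.prodMk ((hκ.comp continuous_fst).kplus continuous_snd))
  have hminus : Continuous fun q : ℝ × Sd d => v q.1 (kminus (κ q.1) q.2) :=
    hv.comp (continuous_fst.prodMk ((hκ.comp continuous_fst).kminus continuous_snd))
  have hker : Measurable fun q : ℝ × Sd d => g (khatDot (κ q.1) q.2) :=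
    hg.comp ((hκ.measurable.comp measurable_fst).khatDot measurable_snd)
  unfold LopR
  refine Measurable.ite (measurableSet_eq_fun hκ.measurable measurable_const)
    ((hv.comp (continuous_id.prodMk continuous_const)).measurable.const_mul 2) ?_
  exact (StronglyMeasurable.integral_prod_right
    (hker.mul (hplus.add hminus).measurable).stronglyMeasurable).measurable

theorem measurable_Gam_comp (hg : Measurable g) {φ : ℝ → Rd d → ℂ}
    (hφ : Continuous (Function.uncurry φ)) {κ : ℝ → Rd d} (hκ : Continuous κ) :
    Measurable fun τ => Gam g (φ τ) (κ τ) := by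
  have hplus : Continuous fun q : ℝ × Sd d => φ q.1 (kplus (κ q.1) q.2) :=
    hφ.comp (continuous_fst.prodMk ((hκ.comp continuous_fst).kplus continuous_snd))
  have hminus : Continuous fun q : ℝ × Sd d => φ q.1 (kminus (κ q.1) q.2) :=
    hφ.comp (continuous_fst.prodMk ((hκ.comp continuous_fst).kminus continuous_snd))
  have hker : Measurable fun q : ℝ × Sd d => (g (khatDot (κ q.1) q.2) : ℂ) :=
    Complex.measurable_ofReal.comp
      (hg.comp ((hκ.measurable.comp measurable_fst).khatDot measurable_snd))
  have hφ0 : Continuous fun τ => φ τ 0 := hφ.comp (continuous_id.prodMk continuous_const)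
  unfold Gam Iplus
  refine Measurable.ite (measurableSet_eq_fun hκ.measurable measurable_const)
    (hφ0.mul hφ0).measurable ?_
  exact (StronglyMeasurable.integral_prod_right
    ((hker.mul hplus.measurable).mul hminus.measurable).stronglyMeasurable).measurable

end TimeRegularity

section Duhamel

variable {d : ℕ} {g : ℝ → ℝ} {A : Matrix (Fin d) (Fin d) ℝ}

def linearDuhamel (g : ℝ → ℝ) (A : Matrix (Fin d) (Fin d) ℝ) (v : ℝ → Rd d → ℝ) (t : ℝ)
    (k : Rd d) : ℝ :=
  ∫ τ in (0 : ℝ)..t, Real.exp (-(t - τ)) * LopR g (v τ) (expA A (-(t - τ)) k)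

theorem continuous_expA_sub (A : Matrix (Fin d) (Fin d) ℝ) (t : ℝ) (k : Rd d) :
    Continuous fun τ => expA A (-(t - τ)) k :=
  (continuous_expA A k).comp (by fun_prop)

theorem intervalIntegrable_of_eqOn_Icc {E : Type*} [NormedAddCommGroup E] {F G : ℝ → E}
    {t : ℝ} (ht : 0 ≤ t) (hG : AEStronglyMeasurable G) (hFG : EqOn F G (Icc 0 t)) {C : ℝ}
    (hF : ∀ τ ∈ Icc 0 t, ‖F τ‖ ≤ C) : IntervalIntegrable F volume 0 t := by
  rw [intervalIntegrable_iff_integrableOn_Icc_of_le ht]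
  exact .of_bound measure_Icc_lt_top
    (hG.restrict.congr ((ae_restrict_mem measurableSet_Icc).mono fun τ hτ => (hFG hτ).symm)) C
    (ae_restrict_of_forall_mem measurableSet_Icc hF)

theorem exists_bound_LopR_comp (hg : IsNormalizedKernel d g) {v : ℝ → Rd d → ℝ}
    (hv : ContinuousOn (Function.uncurry v) (Ici 0 ×ˢ univ)) {κ : ℝ → Rd d}
    (hκ : Continuous κ) (t : ℝ) : ∃ C, ∀ τ ∈ Icc 0 t, |LopR g (v τ) (κ τ)| ≤ C := by
  obtain ⟨R, hR⟩ := (isCompact_Icc (a := 0) (b := t)).exists_bound_of_continuousOn hκ.continuousOn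
  obtain ⟨M, hM⟩ := ((isCompact_Icc (a := 0) (b := t)).prod
    (isCompact_closedBall (0 : Rd d) R)).exists_bound_of_continuousOn
    (hv.mono (prod_mono Icc_subset_Ici_self (subset_univ _)))
  refine ⟨2 * M, fun τ hτ => abs_LopR_le hg (hv.continuous_of_uncurry hτ.1) fun x hx => ?_⟩
  exact hM (τ, x) ⟨hτ, mem_closedBall_zero_iff.2 (hx.trans (hR τ hτ))⟩

theorem intervalIntegrable_exp_mul_LopR (hg : IsNormalizedKernel d g)
    (A : Matrix (Fin d) (Fin d) ℝ) {v : ℝ → Rd d → ℝ}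
    (hv : ContinuousOn (Function.uncurry v) (Ici 0 ×ˢ univ)) {t : ℝ} (ht : 0 ≤ t) (k : Rd d) :
    IntervalIntegrable (fun τ => Real.exp (-(t - τ)) * LopR g (v τ) (expA A (-(t - τ)) k))
      volume 0 t := by
  obtain ⟨C, hC⟩ := exists_bound_LopR_comp hg hv (continuous_expA_sub A t k) t
  refine intervalIntegrable_of_eqOn_Icc ht
    (G := fun τ => Real.exp (-(t - τ)) * LopR g (v (max τ 0)) (expA A (-(t - τ)) k))
    ((by fun_prop : Measurable fun τ : ℝ => Real.exp (-(t - τ))).mul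
      (measurable_LopR_comp hg.measurable hv.continuous_uncurry_max
        (continuous_expA_sub A t k))).aestronglyMeasurable
    (fun τ hτ => by simp only [max_eq_left hτ.1]) (C := C) fun τ hτ => ?_
  rw [norm_mul, Real.norm_of_nonneg (Real.exp_nonneg _), Real.norm_eq_abs]
  exact (mul_le_of_le_one_left (abs_nonneg _) (Real.exp_le_one_iff.2 (by linarith [hτ.2]))).trans
    (hC τ hτ)

theorem IsMildSolution.continuousOn {φ₀ : Rd d → ℂ} {φ : ℝ → Rd d → ℂ}
    (h : IsMildSolution g A φ₀ φ) : ContinuousOn (Function.uncurry φ) (Ici 0 ×ˢ univ) := by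
  rintro ⟨t, x⟩ ⟨ht, -⟩
  have hunif : TendstoUniformly (fun q : ℝ × Rd d => φ q.1) (φ t) (𝓝[Ici 0 ×ˢ univ] (t, x)) := by
    rw [Metric.tendstoUniformly_iff]
    intro ε hε
    obtain ⟨δ, hδ, hφδ⟩ := h.2.1 t ht (ε / 2) (half_pos hε)
    have hnear : ∀ᶠ q : ℝ × Rd d in 𝓝[Ici 0 ×ˢ univ] (t, x), q.1 ∈ Metric.ball t δ :=
      ((continuous_fst.tendsto (t, x)).mono_left nhdsWithin_le_nhds).eventually
        (Metric.ball_mem_nhds t hδ)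
    filter_upwards [self_mem_nhdsWithin, hnear] with q hq hqδ y
    rw [dist_comm, dist_eq_norm]
    exact (hφδ q.1 hq.1 hqδ y).trans_lt (half_lt_self hε)
  exact hunif.tendsto_comp (h.1 t ht).continuous.continuousAt
    ((continuous_snd.tendsto (t, x)).mono_left nhdsWithin_le_nhds)

theorem IsMildSolution.intervalIntegrable_duhamel (hg : IsNormalizedKernel d g)
    {φ₀ : Rd d → ℂ} {φ : ℝ → Rd d → ℂ} (h : IsMildSolution g A φ₀ φ) {t : ℝ} (ht : 0 ≤ t)
    (k : Rd d) :
    IntervalIntegrable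
      (fun τ => (Real.exp (-(t - τ)) : ℂ) * Gam g (φ τ) (expA A (-(t - τ)) k)) volume 0 t := by
  refine intervalIntegrable_of_eqOn_Icc ht
    (G := fun τ => (Real.exp (-(t - τ)) : ℂ) * Gam g (φ (max τ 0)) (expA A (-(t - τ)) k))
    ((Complex.measurable_ofReal.comp (by fun_prop)).mul
      (measurable_Gam_comp hg.measurable h.continuousOn.continuous_uncurry_max
        (continuous_expA_sub A t k))).aestronglyMeasurable
    (fun τ hτ => by simp only [max_eq_left hτ.1]) (C := 1) fun τ hτ => ?_
  rw [norm_mul, Complex.norm_real, Real.norm_of_nonneg (Real.exp_nonneg _)]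
  exact mul_le_one₀ (Real.exp_le_one_iff.2 (by linarith [hτ.2])) (norm_nonneg _)
    (norm_Gam_le_one hg (h.1 τ hτ.1).norm_le_one _)

theorem IsMildSolution.continuousOn_norm_sub {φ₁₀ φ₂₀ : Rd d → ℂ} {φ₁ φ₂ : ℝ → Rd d → ℂ}
    (h₁ : IsMildSolution g A φ₁₀ φ₁) (h₂ : IsMildSolution g A φ₂₀ φ₂) :
    ContinuousOn (Function.uncurry fun τ x => ‖φ₁ τ x - φ₂ τ x‖) (Ici 0 ×ˢ univ) :=
  (h₁.continuousOn.sub h₂.continuousOn).norm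

end Duhamel

section Comparison

variable {d : ℕ} {g : ℝ → ℝ} {A : Matrix (Fin d) (Fin d) ℝ}

theorem IsMildSolution.norm_sub_le_linearDuhamel (hg : IsNormalizedKernel d g)
    {φ₁₀ φ₂₀ : Rd d → ℂ} {φ₁ φ₂ : ℝ → Rd d → ℂ} (h₁ : IsMildSolution g A φ₁₀ φ₁)
    (h₂ : IsMildSolution g A φ₂₀ φ₂) {t : ℝ} (ht : 0 ≤ t) (k : Rd d) :
    ‖φ₁ t k - φ₂ t k‖ ≤ Real.exp (-t) * ‖φ₁₀ (expA A (-t) k) - φ₂₀ (expA A (-t) k)‖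
      + linearDuhamel g A (fun τ x => ‖φ₁ τ x - φ₂ τ x‖) t k := by
  rw [h₁.2.2 t ht k, h₂.2.2 t ht k, add_sub_add_comm, ← mul_sub,
    ← intervalIntegral.integral_sub (h₁.intervalIntegrable_duhamel hg ht k)
      (h₂.intervalIntegrable_duhamel hg ht k)]
  refine (norm_add_le _ _).trans (add_le_add ?_ ?_)
  · rw [norm_mul, Complex.norm_real, Real.norm_of_nonneg (Real.exp_nonneg _)]
  refine intervalIntegral.norm_integral_le_of_norm_le ht (ae_of_all _ fun τ hτ => ?_)
    (intervalIntegrable_exp_mul_LopR hg A (h₁.continuousOn_norm_sub h₂) ht k)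
  rw [← mul_sub, norm_mul, Complex.norm_real, Real.norm_of_nonneg (Real.exp_nonneg _)]
  exact mul_le_mul_of_nonneg_left (norm_Gam_sub_le hg (h₁.1 τ hτ.1.le).continuous
    (h₂.1 τ hτ.1.le).continuous (h₁.1 τ hτ.1.le).norm_le_one (h₂.1 τ hτ.1.le).norm_le_one _)
    (Real.exp_nonneg _)

theorem linearDuhamel_le_add (hg : IsNormalizedKernel d g) {v w : ℝ → Rd d → ℝ}
    (hv : ContinuousOn (Function.uncurry v) (Ici 0 ×ˢ univ))
    (hw : ContinuousOn (Function.uncurry w) (Ici 0 ×ˢ univ)) {c : ℝ → ℝ} (hc : Continuous c)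
    {t : ℝ} (ht : 0 ≤ t) (k : Rd d) (hc0 : ∀ τ ∈ Icc 0 t, 0 ≤ c τ)
    (hwv : ∀ τ ∈ Icc 0 t, ∀ x, w τ x ≤ v τ x + c τ) :
    linearDuhamel g A w t k ≤ linearDuhamel g A v t k + 2 * ∫ τ in (0 : ℝ)..t, c τ := by
  have hIv := intervalIntegrable_exp_mul_LopR hg A hv ht k
  have hIc : IntervalIntegrable (fun τ => 2 * c τ) volume 0 t :=
    (continuous_const.mul hc).intervalIntegrable 0 t
  rw [linearDuhamel, linearDuhamel, ← intervalIntegral.integral_const_mul,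
    ← intervalIntegral.integral_add hIv hIc]
  refine intervalIntegral.integral_mono_on ht (intervalIntegrable_exp_mul_LopR hg A hw ht k)
    (hIv.add hIc) fun τ hτ => ?_
  have hL := LopR_le_add hg (hv.continuous_of_uncurry hτ.1) (hw.continuous_of_uncurry hτ.1)
    (k := expA A (-(t - τ)) k) fun x _ => hwv τ hτ x
  have hexp := mul_le_mul_of_nonneg_left hL (Real.exp_nonneg (-(t - τ)))
  have hexp_c : Real.exp (-(t - τ)) * c τ ≤ c τ :=
    mul_le_of_le_one_left (hc0 τ hτ) (Real.exp_le_one_iff.2 (by linarith [hτ.2]))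
  linarith

theorem mul_integral_pow_div_factorial (a t : ℝ) (n : ℕ) :
    a * ∫ τ in (0 : ℝ)..t, (a * τ) ^ n / n.factorial = (a * t) ^ (n + 1) / (n + 1).factorial := by
  have hpoly : (fun τ : ℝ => (a * τ) ^ n / n.factorial) = fun τ => a ^ n / n.factorial * τ ^ n := by
    funext τ; ring
  rw [hpoly, intervalIntegral.integral_const_mul, integral_pow, Nat.factorial_succ]
  push_cast
  field_simp
  ring

theorem IsMildSolution.norm_sub_le_add_pow_div_factorial (hg : IsNormalizedKernel d g)
    {φ₁₀ φ₂₀ : Rd d → ℂ} {φ₁ φ₂ : ℝ → Rd d → ℂ} (h₁ : IsMildSolution g A φ₁₀ φ₁)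
    (h₂ : IsMildSolution g A φ₂₀ φ₂) {u : ℝ → Rd d → ℝ}
    (hu_cont : ContinuousOn (Function.uncurry u) (Ici 0 ×ˢ univ))
    (hu_nonneg : ∀ t, 0 ≤ t → ∀ k, 0 ≤ u t k)
    (hu_super : ∀ t, 0 ≤ t → ∀ k : Rd d,
      Real.exp (-t) * ‖φ₁₀ (expA A (-t) k) - φ₂₀ (expA A (-t) k)‖ + linearDuhamel g A u t k
        ≤ u t k) (n : ℕ) :
    ∀ t, 0 ≤ t → ∀ k, ‖φ₁ t k - φ₂ t k‖ ≤ u t k + 2 * ((2 * t) ^ n / n.factorial) := by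
  induction n with
  | zero =>
    intro t ht k
    simp only [pow_zero, Nat.factorial_zero, Nat.cast_one, div_one, mul_one]
    linarith [norm_sub_le (φ₁ t k) (φ₂ t k), (h₁.1 t ht).norm_le_one k,
      (h₂.1 t ht).norm_le_one k, hu_nonneg t ht k]
  | succ n ih =>
    intro t ht k
    have hc0 : ∀ τ ∈ Icc 0 t, 0 ≤ 2 * ((2 * τ) ^ n / n.factorial) := fun τ hτ => by
      have := hτ.1; positivity
    have hlin := linearDuhamel_le_add (A := A) hg hu_cont (h₁.continuousOn_norm_sub h₂)
      (by fun_prop) ht k hc0 fun τ hτ x => ih τ hτ.1 x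
    rw [intervalIntegral.integral_const_mul, mul_integral_pow_div_factorial] at hlin
    linarith [h₁.norm_sub_le_linearDuhamel hg h₂ ht k, hu_super t ht k]

end Comparison

theorem comparison_theorem_general (d : ℕ)
    (g : ℝ → ℝ) (hg_meas : Measurable g) (hg_nonneg : ∀ x, 0 ≤ g x)
    (hg_norm : ∀ ω : Rd d, ‖ω‖ = 1 → ∫ n, g ⟪ω, (n : Rd d)⟫ ∂(sphMeasure d) = 1)
    (A : Matrix (Fin d) (Fin d) ℝ)
    (φ₁₀ φ₂₀ : Rd d → ℂ)
    (φ₁ φ₂ : ℝ → Rd d → ℂ)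
    (h₁ : IsMildSolution g A φ₁₀ φ₁) (h₂ : IsMildSolution g A φ₂₀ φ₂)
    (u : ℝ → Rd d → ℝ)
    (hu_cont : ContinuousOn (fun q : ℝ × Rd d => u q.1 q.2) (Set.Ici 0 ×ˢ Set.univ))
    (hu_nonneg : ∀ t, 0 ≤ t → ∀ k, 0 ≤ u t k)
    (hu_super : ∀ t, 0 ≤ t → ∀ k : Rd d,
      Real.exp (-t) * ‖φ₁₀ (expA A (-t) k) - φ₂₀ (expA A (-t) k)‖
          + (∫ τ in (0:ℝ)..t, Real.exp (-(t - τ)) * LopR g (u τ) (expA A (-(t - τ)) k))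
        ≤ u t k) :
    ∀ t, 0 ≤ t → ∀ k : Rd d, ‖φ₁ t k - φ₂ t k‖ ≤ u t k := by
  intro t ht k
  have hg : IsNormalizedKernel d g := ⟨hg_meas, hg_nonneg, hg_norm⟩
  have hlim : Tendsto (fun n : ℕ => u t k + 2 * ((2 * t) ^ n / n.factorial)) atTop (𝓝 (u t k)) := by
    simpa using tendsto_const_nhds.add
      ((FloorSemiring.tendsto_pow_div_factorial_atTop (2 * t)).const_mul 2)
  exact ge_of_tendsto' hlim fun n =>
    h₁.norm_sub_le_add_pow_div_factorial hg h₂ hu_cont hu_nonneg hu_super n t ht k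

/-- Comparison theorem: a supersolution of the linearized problem with
    initial datum |φ₁,₀ − φ₂,₀| dominates the difference of two mild solutions. -/
theorem comparison_theorem (d : ℕ) (hd : 2 ≤ d)
    (g : ℝ → ℝ) (hg_meas : Measurable g) (hg_nonneg : ∀ x, 0 ≤ g x)
    (hg_norm : ∀ ω : Rd d, ‖ω‖ = 1 → ∫ n, g ⟪ω, (n : Rd d)⟫ ∂(sphMeasure d) = 1)
    (A : Matrix (Fin d) (Fin d) ℝ)
    (φ₁₀ φ₂₀ : Rd d → ℂ) (hφ₁₀ : IsCharFun φ₁₀) (hφ₂₀ : IsCharFun φ₂₀)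
    (φ₁ φ₂ : ℝ → Rd d → ℂ)
    (h₁ : IsMildSolution g A φ₁₀ φ₁) (h₂ : IsMildSolution g A φ₂₀ φ₂)
    (p : ℝ) (hp : 0 < p)
    (u : ℝ → Rd d → ℝ)
    (hu_cont : ContinuousOn (fun q : ℝ × Rd d => u q.1 q.2) (Set.Ici 0 ×ˢ Set.univ))
    (hu_nonneg : ∀ t, 0 ≤ t → ∀ k, 0 ≤ u t k)
    (hu_growth : ∀ t, 0 ≤ t → ∃ C : ℝ, ∀ k, u t k ≤ C * (1 + ‖k‖ ^ p))
    (hu_super : ∀ t, 0 ≤ t → ∀ k : Rd d,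
      Real.exp (-t) * ‖φ₁₀ (expA A (-t) k) - φ₂₀ (expA A (-t) k)‖
          + (∫ τ in (0:ℝ)..t, Real.exp (-(t - τ)) * LopR g (u τ) (expA A (-(t - τ)) k))
        ≤ u t k) :
    ∀ t, 0 ≤ t → ∀ k : Rd d, ‖φ₁ t k - φ₂ t k‖ ≤ u t k :=
  comparison_theorem_general d g hg_meas hg_nonneg hg_norm A φ₁₀ φ₂₀ φ₁ φ₂ h₁ h₂ u hu_cont hu_nonneg
    hu_super
end
end

section
/- For every p > 0 the function |k|^p is an eigenfunction of the linearized operator L with eigenvalue 1 − λ(p): for every k ∈ ℝ^d \ {0}, ∫_{S^{d-1}} g(k̂·n) (|k₊|^p + |k₋|^p) dσ(n) = (1 − λ(p)) |k|^p. -/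
open MeasureTheory
open scoped Classical Matrix
noncomputable section

open scoped RealInnerProductSpace

/-!
With `t = k̂·n` one has `|k±|² = |k|² (1 ± t)/2`, so `|k₊|^p + |k₋|^p = |k|^p F(t)` with
`F(t) = splitRpow p t = ((1+t)/2)^{p/2} + ((1-t)/2)^{p/2}`. The integral of `g(t) F(t)` over
the sphere does not depend on the unit vector defining `t`, because the reflection carrying `k̂`
to `ω` preserves the surface measure. Finally `F` is bounded on `[-1, 1]`, so `∫ g (1 - F) = 1 - ∫ g F`.
-/

open Metric
open scoped Pointwise

namespace LinearIsometryEquiv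

variable {E : Type*} [NormedAddCommGroup E] [NormedSpace ℝ E]

def sphereEquiv (R : E ≃ₗᵢ[ℝ] E) : sphere (0 : E) 1 ≃ₜ sphere (0 : E) 1 :=
  R.toHomeomorph.subtype fun x => by simp

lemma image_set_smul (R : E ≃ₗᵢ[ℝ] E) (A : Set ℝ) (S : Set E) :
    R '' (A • S) = A • R '' S :=
  Set.image_image2_distrib_right fun c x => R.map_smul c x

lemma image_coe_preimage_sphereEquiv (R : E ≃ₗᵢ[ℝ] E) (s : Set (sphere (0 : E) 1)) :
    ((↑) : sphere (0 : E) 1 → E) '' (R.sphereEquiv ⁻¹' s) = R.symm '' ((↑) '' s) := by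
  rw [← R.sphereEquiv.image_symm, Set.image_image, Set.image_image]
  rfl

lemma measurePreserving_sphereEquiv [MeasurableSpace E] [BorelSpace E] (R : E ≃ₗᵢ[ℝ] E)
    {μ : Measure E} (hR : MeasurePreserving R μ μ) :
    MeasurePreserving R.sphereEquiv μ.toSphere μ.toSphere := by
  have hmeas := R.sphereEquiv.continuous.measurable
  refine ⟨hmeas, Measure.ext fun s hs => ?_⟩
  rw [Measure.map_apply hmeas hs, Measure.toSphere_apply' _ hs,
    Measure.toSphere_apply' _ (hmeas hs), image_coe_preimage_sphereEquiv, ← image_set_smul,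
    R.symm.image_eq_preimage_symm, R.symm_symm]
  exact congrArg _ <| hR.measure_preimage_equiv (f := R.toHomeomorph.toMeasurableEquiv) _

end LinearIsometryEquiv

section InnerProductSpace

variable {E : Type*} [NormedAddCommGroup E] [InnerProductSpace ℝ E]

lemma abs_real_inner_le_norm_of_mem_sphere (u : E) (x : sphere (0 : E) 1) :
    |⟪u, (x : E)⟫| ≤ ‖u‖ := by
  simpa using abs_real_inner_le_norm u x

lemma integral_toSphere_comp_inner_eq [MeasurableSpace E] [BorelSpace E] [FiniteDimensional ℝ E]
    {G : Type*} [NormedAddCommGroup G] [NormedSpace ℝ G] {u v : E} (huv : ‖u‖ = ‖v‖)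
    (f : ℝ → G) :
    ∫ x, f ⟪u, (x : E)⟫ ∂(volume : Measure E).toSphere
      = ∫ x, f ⟪v, (x : E)⟫ ∂(volume : Measure E).toSphere := by
  set R := Submodule.reflection (ℝ ∙ (v - u))ᗮ
  have hRv : R v = u := Submodule.reflection_sub huv.symm
  calc ∫ x, f ⟪u, (x : E)⟫ ∂(volume : Measure E).toSphere
      = ∫ x, f ⟪u, (R.sphereEquiv x : E)⟫ ∂(volume : Measure E).toSphere :=
        ((R.measurePreserving_sphereEquiv R.measurePreserving).integral_comp'
          (f := R.sphereEquiv.toMeasurableEquiv) _).symm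
    _ = ∫ x, f ⟪v, (x : E)⟫ ∂(volume : Measure E).toSphere := by
        congr! 3 with x
        rw [← hRv]
        exact R.inner_map_map v x

end InnerProductSpace

lemma norm_rpow_eq_of_norm_sq_eq {F : Type*} [NormedAddCommGroup F] {v : F} {c t : ℝ}
    (hc : 0 ≤ c) (ht : 0 ≤ t) (h : ‖v‖ ^ 2 = c ^ 2 * t) (p : ℝ) :
    ‖v‖ ^ p = c ^ p * t ^ (p / 2) := by
  rw [← Real.sqrt_sq (norm_nonneg v), h, Real.sqrt_mul' _ ht, Real.sqrt_sq hc,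
    Real.mul_rpow hc (Real.sqrt_nonneg t), Real.rpow_div_two_eq_sqrt p ht]

def splitRpow (p t : ℝ) : ℝ := ((1 + t) / 2) ^ (p / 2) + ((1 - t) / 2) ^ (p / 2)

lemma measurable_splitRpow (p : ℝ) : Measurable (splitRpow p) := by
  unfold splitRpow
  fun_prop

lemma abs_splitRpow_le_two {p t : ℝ} (hp : 0 ≤ p) (ht : |t| ≤ 1) : |splitRpow p t| ≤ 2 := by
  obtain ⟨ht₁, ht₂⟩ := abs_le.1 ht
  have h_plus : ((1 + t) / 2) ^ (p / 2) ≤ 1 :=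
    Real.rpow_le_one (by linarith) (by linarith) (by positivity)
  have h_minus : ((1 - t) / 2) ^ (p / 2) ≤ 1 :=
    Real.rpow_le_one (by linarith) (by linarith) (by positivity)
  have h_nonneg : 0 ≤ splitRpow p t :=
    add_nonneg (Real.rpow_nonneg (by linarith) _) (Real.rpow_nonneg (by linarith) _)
  rw [abs_of_nonneg h_nonneg, splitRpow]
  linarith

section Collision

variable {d : ℕ} (k : Rd d) (n : Sd d)

lemma inner_eq_norm_mul_khatDot : ⟪k, (n : Rd d)⟫ = ‖k‖ * khatDot k n := by
  rcases eq_or_ne k 0 with rfl | hk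
  · simp
  · rw [khatDot, real_inner_smul_left, mul_inv_cancel_left₀ (norm_ne_zero_iff.2 hk)]

lemma abs_khatDot_le_one : |khatDot k n| ≤ 1 := by
  refine (abs_real_inner_le_norm_of_mem_sphere _ n).trans ?_
  rw [norm_smul, norm_inv, norm_norm]
  exact inv_mul_le_one_of_le₀ le_rfl (norm_nonneg k)

lemma norm_kplus_sq : ‖kplus k n‖ ^ 2 = ‖k‖ ^ 2 * ((1 + khatDot k n) / 2) := by
  rw [kplus, norm_smul, mul_pow, norm_add_sq_real, real_inner_smul_right,
    inner_eq_norm_mul_khatDot, norm_smul, norm_norm, norm_eq_of_mem_sphere n]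
  norm_num
  ring

lemma norm_kminus_sq : ‖kminus k n‖ ^ 2 = ‖k‖ ^ 2 * ((1 - khatDot k n) / 2) := by
  rw [kminus, norm_smul, mul_pow, norm_sub_sq_real, real_inner_smul_right,
    inner_eq_norm_mul_khatDot, norm_smul, norm_norm, norm_eq_of_mem_sphere n]
  norm_num
  ring

lemma norm_kplus_rpow_add_norm_kminus_rpow (p : ℝ) :
    ‖kplus k n‖ ^ p + ‖kminus k n‖ ^ p = ‖k‖ ^ p * splitRpow p (khatDot k n) := by
  obtain ⟨ht₁, ht₂⟩ := abs_le.1 (abs_khatDot_le_one k n)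
  rw [norm_rpow_eq_of_norm_sq_eq (norm_nonneg k) (by linarith) (norm_kplus_sq k n),
    norm_rpow_eq_of_norm_sq_eq (norm_nonneg k) (by linarith) (norm_kminus_sq k n), splitRpow]
  ring

end Collision

theorem Lop_rpow_eigenfunction_general (d : ℕ)
    (g : ℝ → ℝ)
    (hg_norm : ∀ ω : Rd d, ‖ω‖ = 1 → ∫ n, g ⟪ω, (n : Rd d)⟫ ∂(sphMeasure d) = 1)
    (p : ℝ) (hp : 0 < p) :
    ∀ ω : Rd d, ‖ω‖ = 1 → ∀ k : Rd d, k ≠ 0 →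
      (∫ n, g (khatDot k n) * (‖kplus k n‖ ^ p + ‖kminus k n‖ ^ p) ∂(sphMeasure d))
        = (1 - ∫ n, g ⟪ω, (n : Rd d)⟫ *
              (1 - ((1 + ⟪ω, (n : Rd d)⟫) / 2) ^ (p / 2)
                 - ((1 - ⟪ω, (n : Rd d)⟫) / 2) ^ (p / 2)) ∂(sphMeasure d))
          * ‖k‖ ^ p := by
  intro ω hω k hk
  have hg_int : Integrable (fun n : Sd d => g ⟪ω, (n : Rd d)⟫) (sphMeasure d) :=
    integrable_of_integral_eq_one (hg_norm ω hω)
  have hsplit_int : Integrable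
      (fun n : Sd d => splitRpow p ⟪ω, (n : Rd d)⟫ * g ⟪ω, (n : Rd d)⟫) (sphMeasure d) :=
    hg_int.bdd_mul ((measurable_splitRpow p).comp (by fun_prop)).aestronglyMeasurable
      (ae_of_all _ fun n => abs_splitRpow_le_two hp.le
        (hω ▸ abs_real_inner_le_norm_of_mem_sphere ω n))
  have h_lambda : ∫ n, g ⟪ω, (n : Rd d)⟫ * (1 - ((1 + ⟪ω, (n : Rd d)⟫) / 2) ^ (p / 2)
        - ((1 - ⟪ω, (n : Rd d)⟫) / 2) ^ (p / 2)) ∂(sphMeasure d)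
      = (∫ n, g ⟪ω, (n : Rd d)⟫ ∂(sphMeasure d))
        - ∫ n, splitRpow p ⟪ω, (n : Rd d)⟫ * g ⟪ω, (n : Rd d)⟫ ∂(sphMeasure d) := by
    rw [← integral_sub hg_int hsplit_int]
    congr! 2 with n
    rw [splitRpow]
    ring
  have hk_unit : ‖‖k‖⁻¹ • k‖ = ‖ω‖ := by
    rw [norm_smul, norm_inv, norm_norm, inv_mul_cancel₀ (norm_ne_zero_iff.2 hk), hω]
  calc _ = ‖k‖ ^ p * ∫ n, splitRpow p (khatDot k n) * g (khatDot k n) ∂(sphMeasure d) := by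
        rw [← integral_const_mul]
        congr! 2 with n
        rw [norm_kplus_rpow_add_norm_kminus_rpow]
        ring
    _ = ‖k‖ ^ p * ∫ n, splitRpow p ⟪ω, (n : Rd d)⟫ * g ⟪ω, (n : Rd d)⟫ ∂(sphMeasure d) :=
        congrArg _ (integral_toSphere_comp_inner_eq hk_unit fun t => splitRpow p t * g t)
    _ = _ := by
        rw [h_lambda, hg_norm ω hω]
        ring

/-- |k|^p is an eigenfunction of the linearized collision operator:
    L[|·|^p](k) = (1 − λ(p))|k|^p. -/
theorem Lop_rpow_eigenfunction (d : ℕ) (hd : 2 ≤ d)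
    (g : ℝ → ℝ) (hg_meas : Measurable g) (hg_nonneg : ∀ x, 0 ≤ g x)
    (hg_norm : ∀ ω : Rd d, ‖ω‖ = 1 → ∫ n, g ⟪ω, (n : Rd d)⟫ ∂(sphMeasure d) = 1)
    (p : ℝ) (hp : 0 < p) :
    ∀ ω : Rd d, ‖ω‖ = 1 → ∀ k : Rd d, k ≠ 0 →
      (∫ n, g (khatDot k n) * (‖kplus k n‖ ^ p + ‖kminus k n‖ ^ p) ∂(sphMeasure d))
        = (1 - ∫ n, g ⟪ω, (n : Rd d)⟫ *
              (1 - ((1 + ⟪ω, (n : Rd d)⟫) / 2) ^ (p / 2)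
                 - ((1 - ⟪ω, (n : Rd d)⟫) / 2) ^ (p / 2)) ∂(sphMeasure d))
          * ‖k‖ ^ p :=
  Lop_rpow_eigenfunction_general d g hg_norm p hp
end
end
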